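/- arXiv:2505.09427 — 2 statements merged into one kernel-verified Lean document; each statement's English description precedes it below -/
import Mathlib

section
/- Let (S_1, ..., S_n, S_{n+1}) be real-valued random variables on a probability space that are exchangeable (their joint distribution is invariant under every permutation of the n+1 coordinates). Fix α ∈ (0,1) and suppose ⌈(n+1)(1−α)⌉ ≤ n. Let q̂ denote the ⌈(n+1)(1−α)⌉-th smallest value among S_1, ..., S_n. Then P(S_{n+1} ≤ q̂) ≥ 1 − α. -/
open MeasureTheory

/-- The `k`-th smallest value (1-indexed) among `s 0, …, s (n-1)`. -/
noncomputable def kthSmallest {n : ℕ} (s : Fin n → ℝ) (k : ℕ) : ℝ :=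
  if h : k - 1 < n then s (Tuple.sort s ⟨k - 1, h⟩) else 0

open Finset in
/-- If fewer than `k` of the values are strictly below `x`, then `x` is at most the
`k`-th smallest value. -/
lemma le_kthSmallest_of_card_lt {n : ℕ} (s : Fin n → ℝ) (k : ℕ) (hk1 : 1 ≤ k)
    (hkn : k - 1 < n) (x : ℝ)
    (h : (univ.filter (fun i => s i < x)).card < k) :
    x ≤ kthSmallest s k := by
  rw [kthSmallest, dif_pos hkn]
  by_contra hlt
  push_neg at hlt
  have hmono := Tuple.monotone_sort s
  have hsub : (Finset.Iic (⟨k - 1, hkn⟩ : Fin n)).image (Tuple.sort s)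
      ⊆ univ.filter (fun i => s i < x) := by
    intro i hi
    simp only [Finset.mem_image, Finset.mem_Iic] at hi
    obtain ⟨m, hm, rfl⟩ := hi
    simp only [Finset.mem_filter, Finset.mem_univ, true_and]
    exact lt_of_le_of_lt (hmono hm) hlt
  have hcard : ((Finset.Iic (⟨k - 1, hkn⟩ : Fin n)).image (Tuple.sort s)).card = k := by
    rw [Finset.card_image_of_injective _ (Tuple.sort s).injective, Fin.card_Iic]
    show k - 1 + 1 = k
    omega
  have := Finset.card_le_card hsub
  omega

open Finset in
/-- At least `k` indices `j` have fewer than `k` values strictly below `v j`. -/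
lemma count_le {N : ℕ} (v : Fin N → ℝ) (k : ℕ) (hk : k ≤ N) :
    k ≤ (univ.filter (fun j => (univ.filter (fun i => v i < v j)).card < k)).card := by
  set τ := Tuple.sort v with hτ
  have hmono := Tuple.monotone_sort v
  have hsub : (univ.filter (fun m : Fin N => (m : ℕ) < k)).image τ ⊆
      univ.filter (fun j => (univ.filter (fun i => v i < v j)).card < k) := by
    intro j hj
    simp only [Finset.mem_image, Finset.mem_filter, Finset.mem_univ, true_and] at hj ⊢
    obtain ⟨m, hm, rfl⟩ := hj
    have hsub2 : univ.filter (fun i => v i < v (τ m)) ⊆ (Finset.Iio m).image τ := by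
      intro i hi
      simp only [Finset.mem_filter, Finset.mem_univ, true_and] at hi
      simp only [Finset.mem_image, Finset.mem_Iio]
      refine ⟨τ.symm i, ?_, by simp⟩
      by_contra hge
      push_neg at hge
      have h2 : (v ∘ τ) m ≤ (v ∘ τ) (τ.symm i) := hmono hge
      simp only [Function.comp_apply, Equiv.apply_symm_apply] at h2
      exact absurd hi (not_lt.mpr h2)
    calc (univ.filter (fun i => v i < v (τ m))).card
        ≤ ((Finset.Iio m).image τ).card := Finset.card_le_card hsub2
      _ ≤ (Finset.Iio m).card := Finset.card_image_le
      _ = (m : ℕ) := by simp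
      _ < k := hm
  have hcard : ((univ.filter (fun m : Fin N => (m : ℕ) < k)).image τ).card = k := by
    rw [Finset.card_image_of_injective _ τ.injective]
    have heq : univ.filter (fun m : Fin N => (m : ℕ) < k)
        = univ.image (Fin.castLE hk) := by
      ext m
      simp only [Finset.mem_filter, Finset.mem_univ, true_and]
      rw [Finset.mem_image]
      constructor
      · intro hm; exact ⟨⟨m, hm⟩, Finset.mem_univ _, rfl⟩
      · rintro ⟨a, -, rfl⟩; exact a.isLt
    rw [heq, Finset.card_image_of_injective _ (Fin.castLE_injective hk),
      Finset.card_univ, Fintype.card_fin]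
  have := Finset.card_le_card hsub
  omega

open Finset in
lemma measurable_countSet {N : ℕ} (j : Fin N) :
    Measurable (fun v : Fin N → ℝ => (univ.filter (fun i => v i < v j)).card) := by
  have heq : (fun v : Fin N → ℝ => (univ.filter (fun i => v i < v j)).card)
      = fun v => ∑ i : Fin N, if v i < v j then 1 else 0 := by
    funext v
    rw [Finset.card_filter]
  rw [heq]
  exact Finset.measurable_sum _ (fun i _ =>
    Measurable.ite (measurableSet_lt (measurable_pi_apply i) (measurable_pi_apply j))
      measurable_const measurable_const)

open Finset in
/-- **Split conformal prediction coverage guarantee.**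
If the scores `S 0, …, S n` are exchangeable, `α ∈ (0,1)`, and
`k = ⌈(n+1)(1-α)⌉ ≤ n`, then with `q̂` the `k`-th smallest of the first `n`
scores, `P(S (n+1) ≤ q̂) ≥ 1 - α`. -/
theorem conformal_coverage
    {Ω : Type*} [MeasurableSpace Ω] (P : Measure Ω) [IsProbabilityMeasure P]
    (n : ℕ) (S : Fin (n + 1) → Ω → ℝ)
    (hmeas : ∀ i, Measurable (S i))
    (hexch : ∀ π : Equiv.Perm (Fin (n + 1)),
      P.map (fun ω => fun i => S (π i) ω) = P.map (fun ω => fun i => S i ω))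
    (α : ℝ) (hα : α ∈ Set.Ioo (0 : ℝ) 1)
    (hkn : ⌈((n : ℝ) + 1) * (1 - α)⌉₊ ≤ n) :
    ENNReal.ofReal (1 - α) ≤
      P {ω | S (Fin.last n) ω ≤
        kthSmallest (fun i : Fin n => S i.castSucc ω)
          ⌈((n : ℝ) + 1) * (1 - α)⌉₊} := by
  obtain ⟨hα0, hα1⟩ := hα
  set k := ⌈((n : ℝ) + 1) * (1 - α)⌉₊ with hkdef
  have hpos : (0 : ℝ) < ((n : ℝ) + 1) * (1 - α) := by
    have : (0 : ℝ) < 1 - α := by linarith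
    positivity
  have hk1 : 1 ≤ k := Nat.ceil_pos.mpr hpos
  -- the joint law
  set Φ : Ω → (Fin (n + 1) → ℝ) := fun ω i => S i ω with hΦdef
  have hΦ : Measurable Φ := measurable_pi_lambda _ (fun i => hmeas i)
  set μ : Measure (Fin (n + 1) → ℝ) := P.map Φ with hμdef
  haveI hμprob : IsProbabilityMeasure μ := Measure.isProbabilityMeasure_map hΦ.aemeasurable
  -- the rank events
  set B : Fin (n + 1) → Set (Fin (n + 1) → ℝ) :=
    fun j => {v | (univ.filter (fun i => v i < v j)).card < k} with hBdef
  have hB : ∀ j, MeasurableSet (B j) := by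
    intro j
    have : B j = (fun v : Fin (n + 1) → ℝ =>
        (univ.filter (fun i => v i < v j)).card) ⁻¹' (Set.Iio k) := rfl
    rw [this]
    exact measurable_countSet j ((Set.Iio k).to_countable.measurableSet)
  -- exchangeability: all B j have the same measure
  have hBeq : ∀ j, μ (B j) = μ (B (Fin.last n)) := by
    intro j
    set π := Equiv.swap j (Fin.last n) with hπ
    set T : (Fin (n + 1) → ℝ) → (Fin (n + 1) → ℝ) := fun v => fun i => v (π i) with hT
    have hTm : Measurable T := measurable_pi_lambda _ (fun i => measurable_pi_apply (π i))
    have hmap : μ.map T = μ := by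
      rw [hμdef, Measure.map_map hTm hΦ]
      have : T ∘ Φ = fun ω => fun i => S (π i) ω := rfl
      rw [this]
      exact hexch π
    have hpre : B j = T ⁻¹' (B (Fin.last n)) := by
      ext v
      simp only [hBdef, Set.mem_preimage, Set.mem_setOf_eq, hT]
      have h1 : v (π (Fin.last n)) = v j := by
        rw [hπ]; exact congrArg v (Equiv.swap_apply_right _ _)
      have h2 : (univ.filter (fun i => v (π i) < v (π (Fin.last n)))).card
          = (univ.filter (fun i => v i < v j)).card := by
        apply Finset.card_bij (fun i _ => π i)
        · intro a ha
          simp only [Finset.mem_filter, Finset.mem_univ, true_and] at ha ⊢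
          rwa [h1] at ha
        · intro a _ b _ hab; exact π.injective hab
        · intro b hb
          refine ⟨π.symm b, ?_, by simp⟩
          simp only [Finset.mem_filter, Finset.mem_univ, true_and] at hb ⊢
          rw [Equiv.apply_symm_apply, h1]
          exact hb
      omega
    rw [hpre, ← Measure.map_apply hTm (hB (Fin.last n)), hmap]
  -- counting: k ≤ ∑ j, μ (B j)
  have hsum : (k : ENNReal) ≤ ∑ j : Fin (n + 1), μ (B j) := by
    have hrw : ∀ j, μ (B j) = ∫⁻ v, Set.indicator (B j)
        (1 : (Fin (n + 1) → ℝ) → ENNReal) v ∂μ := by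
      intro j
      rw [lintegral_indicator_one (hB j)]
    calc (k : ENNReal) = ∫⁻ _, (k : ENNReal) ∂μ := by
            simp [lintegral_const]
      _ ≤ ∫⁻ v, ∑ j : Fin (n + 1),
            Set.indicator (B j) (1 : (Fin (n + 1) → ℝ) → ENNReal) v ∂μ := by
            apply lintegral_mono
            intro v
            dsimp only
            set F := univ.filter
              (fun j : Fin (n + 1) => (univ.filter (fun i => v i < v j)).card < k) with hF
            have h1 : ∀ j ∈ F, Set.indicator (B j)
                (1 : (Fin (n + 1) → ℝ) → ENNReal) v = 1 := by
              intro j hj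
              rw [hF, Finset.mem_filter] at hj
              have hvB : v ∈ B j := hj.2
              rw [Set.indicator_of_mem hvB]
              rfl
            calc (k : ENNReal) ≤ (F.card : ENNReal) := by
                  exact_mod_cast count_le v k (by omega)
              _ = ∑ j ∈ F, Set.indicator (B j)
                    (1 : (Fin (n + 1) → ℝ) → ENNReal) v := by
                  rw [Finset.sum_congr rfl h1, Finset.sum_const, nsmul_eq_mul, mul_one]
              _ ≤ ∑ j : Fin (n + 1), Set.indicator (B j)
                    (1 : (Fin (n + 1) → ℝ) → ENNReal) v :=
                  Finset.sum_le_sum_of_subset (Finset.subset_univ F)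
      _ = ∑ j : Fin (n + 1), μ (B j) := by
            rw [lintegral_finset_sum]
            · exact Finset.sum_congr rfl (fun j _ => (hrw j).symm)
            · exact fun j _ => measurable_one.indicator (hB j)
  -- so k ≤ (n+1) * μ (B last)
  have hsum2 : (k : ENNReal) ≤ ((n : ENNReal) + 1) * μ (B (Fin.last n)) := by
    calc (k : ENNReal) ≤ ∑ j : Fin (n + 1), μ (B j) := hsum
      _ = ∑ _j : Fin (n + 1), μ (B (Fin.last n)) :=
          Finset.sum_congr rfl (fun j _ => hBeq j)
      _ = ((n : ENNReal) + 1) * μ (B (Fin.last n)) := by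
          rw [Finset.sum_const, Finset.card_univ, Fintype.card_fin, nsmul_eq_mul]
          push_cast
          ring
  -- (n+1) * ofReal (1-α) ≤ k
  have hle : ((n : ENNReal) + 1) * ENNReal.ofReal (1 - α) ≤ (k : ENNReal) := by
    have h1 : ((n : ENNReal) + 1) = ENNReal.ofReal ((n : ℝ) + 1) := by
      rw [ENNReal.ofReal_add (by positivity) zero_le_one]
      simp
    rw [h1, ← ENNReal.ofReal_mul (by positivity)]
    have h2 : ((n : ℝ) + 1) * (1 - α) ≤ (k : ℝ) := Nat.le_ceil _
    calc ENNReal.ofReal (((n : ℝ) + 1) * (1 - α)) ≤ ENNReal.ofReal (k : ℝ) :=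
          ENNReal.ofReal_le_ofReal h2
      _ = (k : ENNReal) := by simp
  -- hence ofReal (1-α) ≤ μ (B last)
  have hmain : ENNReal.ofReal (1 - α) ≤ μ (B (Fin.last n)) := by
    have hne : ((n : ENNReal) + 1) ≠ 0 := by simp
    have hnetop : ((n : ENNReal) + 1) ≠ ⊤ := by
      simp [ENNReal.add_eq_top]
    have hchain := le_trans hle hsum2
    exact (ENNReal.mul_le_mul_iff_right hne hnetop).mp hchain
  -- B last pulls back inside the target event
  have hsubset : Φ ⁻¹' (B (Fin.last n)) ⊆
      {ω | S (Fin.last n) ω ≤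
        kthSmallest (fun i : Fin n => S i.castSucc ω) k} := by
    intro ω hω
    simp only [Set.mem_preimage, hBdef, Set.mem_setOf_eq, hΦdef] at hω
    simp only [Set.mem_setOf_eq]
    apply le_kthSmallest_of_card_lt _ k hk1 (by omega)
    refine lt_of_le_of_lt ?_ hω
    apply Finset.card_le_card_of_injOn Fin.castSucc
    · intro i hi
      simp only [Finset.mem_coe, Finset.mem_filter, Finset.mem_univ, true_and] at hi ⊢
      exact hi
    · exact (Fin.castSucc_injective n).injOn
  calc ENNReal.ofReal (1 - α) ≤ μ (B (Fin.last n)) := hmain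
    _ = P (Φ ⁻¹' (B (Fin.last n))) := Measure.map_apply hΦ (hB (Fin.last n))
    _ ≤ P {ω | S (Fin.last n) ω ≤
          kthSmallest (fun i : Fin n => S i.castSucc ω) k} := measure_mono hsubset
end

section
/- Let (S_1, ..., S_{n+1}) be real-valued random variables on a probability space that are exchangeable (their joint distribution is invariant under every permutation of the n+1 coordinates). For any integer k with 1 ≤ k ≤ n+1, the probability that S_{n+1} is among the k smallest of the n+1 values — precisely, that the number of indices i ∈ {1, ..., n+1} with S_i < S_{n+1}, plus one, is at most k — is at least k/(n+1). -/
open MeasureTheory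
open scoped ENNReal NNReal

lemma rank_card_lemma (n k : ℕ) (hk2 : k ≤ n + 1) (v : Fin (n + 1) → ℝ) :
    k ≤ (Finset.univ.filter
      (fun j : Fin (n + 1) =>
        (Finset.univ.filter (fun i => v i < v j)).card + 1 ≤ k)).card := by
  set σ := Tuple.sort v with hσ
  have hmono : Monotone (v ∘ σ) := Tuple.monotone_sort v
  have key : ∀ m : Fin k, σ (Fin.castLE hk2 m) ∈ Finset.univ.filter
      (fun j : Fin (n + 1) =>
        (Finset.univ.filter (fun i => v i < v j)).card + 1 ≤ k) := by
    intro m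
    simp only [Finset.mem_filter, Finset.mem_univ, true_and]
    set m0 : Fin (n + 1) := Fin.castLE hk2 m with hm0
    have hcard : (Finset.univ.filter (fun i => v i < v (σ m0))).card
        ≤ (Finset.range m0.val).card := by
      apply Finset.card_le_card_of_injOn (fun i => (σ.symm i).val)
      · intro i hi
        simp only [Finset.mem_coe, Finset.mem_filter, Finset.mem_univ, true_and] at hi
        simp only [Finset.mem_coe, Finset.mem_range]
        by_contra h
        push_neg at h
        have : m0 ≤ σ.symm i := Fin.le_def.mpr h
        have := hmono this
        simp only [Function.comp_apply, Equiv.apply_symm_apply] at this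
        exact absurd hi (not_lt.mpr this)
      · intro a _ b _ hab
        exact σ.symm.injective (Fin.val_injective hab)
    rw [Finset.card_range] at hcard
    have hm : m0.val + 1 ≤ k := by
      have : m0.val = m.val := rfl
      rw [this]
      exact m.isLt
    exact le_trans (Nat.add_le_add_right hcard 1) hm
  calc k = Fintype.card (Fin k) := (Fintype.card_fin k).symm
    _ = (Finset.univ : Finset (Fin k)).card := (Finset.card_univ).symm
    _ ≤ _ := Finset.card_le_card_of_injOn (fun m => σ (Fin.castLE hk2 m))
        (fun m _ => key m)
        (fun a _ b _ hab => Fin.castLE_injective hk2 (σ.injective hab))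

lemma card_filter_comp_perm {m : ℕ} (π : Equiv.Perm (Fin m)) (p : Fin m → Prop)
    [DecidablePred p] :
    (Finset.univ.filter (fun i => p (π i))).card = (Finset.univ.filter p).card := by
  apply Finset.card_bij (fun i _ => π i)
  · intro a ha
    simp only [Finset.mem_filter, Finset.mem_univ, true_and] at ha ⊢
    exact ha
  · intro a _ b _ hab
    exact π.injective hab
  · intro b hb
    refine ⟨π.symm b, ?_, by simp⟩
    simp only [Finset.mem_filter, Finset.mem_univ, true_and] at hb ⊢
    simpa using hb

/-- **Rank lemma for exchangeable scores.**
If `S 0, …, S n` are exchangeable real random variables and `1 ≤ k ≤ n+1`,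
then the rank of `S (n+1)` among all `n+1` scores (one plus the number of
strictly smaller scores) is at most `k` with probability at least `k/(n+1)`. -/
theorem exchangeable_rank_lemma
    {Ω : Type*} [MeasurableSpace Ω] (P : Measure Ω) [IsProbabilityMeasure P]
    (n : ℕ) (S : Fin (n + 1) → Ω → ℝ)
    (hmeas : ∀ i, Measurable (S i))
    (hexch : ∀ π : Equiv.Perm (Fin (n + 1)),
      P.map (fun ω => fun i => S (π i) ω) = P.map (fun ω => fun i => S i ω))
    (k : ℕ) (hk1 : 1 ≤ k) (hk2 : k ≤ n + 1) :
    ENNReal.ofReal ((k : ℝ) / ((n : ℝ) + 1)) ≤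
      P {ω | (Finset.univ.filter
          (fun i : Fin (n + 1) => S i ω < S (Fin.last n) ω)).card + 1 ≤ k} := by
  -- the vector map
  set vec : Ω → (Fin (n + 1) → ℝ) := fun ω i => S i ω with hvec
  have hvecm : Measurable vec := measurable_pi_lambda _ hmeas
  -- events in the product space
  set B : Fin (n + 1) → Set (Fin (n + 1) → ℝ) := fun j =>
    {v | (Finset.univ.filter (fun i => v i < v j)).card + 1 ≤ k} with hB
  have hcardm : ∀ j : Fin (n + 1),
      Measurable (fun v : Fin (n + 1) → ℝ =>
        (Finset.univ.filter (fun i => v i < v j)).card) := by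
    intro j
    have : (fun v : Fin (n + 1) → ℝ =>
        (Finset.univ.filter (fun i => v i < v j)).card)
        = fun v => ∑ i : Fin (n + 1), if v i < v j then 1 else 0 := by
      funext v
      exact Finset.card_filter _ _
    rw [this]
    apply Finset.measurable_sum
    intro i _
    exact Measurable.ite (measurableSet_lt (measurable_pi_apply i)
      (measurable_pi_apply j)) measurable_const measurable_const
  have hBm : ∀ j, MeasurableSet (B j) := by
    intro j
    have : B j = (fun v : Fin (n + 1) → ℝ =>
        (Finset.univ.filter (fun i => v i < v j)).card) ⁻¹' {m | m + 1 ≤ k} := rfl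
    rw [this]
    exact (hcardm j) ((Set.to_countable _).measurableSet)
  -- events in Ω
  set A : Fin (n + 1) → Set Ω := fun j => vec ⁻¹' B j with hA
  have hAm : ∀ j, MeasurableSet (A j) := fun j => hvecm (hBm j)
  -- exchangeability: all A j have the same measure
  have hsame : ∀ j, P (A j) = P (A (Fin.last n)) := by
    intro j
    set π : Equiv.Perm (Fin (n + 1)) := Equiv.swap j (Fin.last n) with hπ
    have hπm : Measurable (fun ω => fun i => S (π i) ω) :=
      measurable_pi_lambda _ (fun i => hmeas (π i))
    have h1 : P (A j) = P.map vec (B j) :=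
      (Measure.map_apply hvecm (hBm j)).symm
    have h2 : P.map vec (B j) = P.map (fun ω => fun i => S (π i) ω) (B j) := by
      rw [hexch π]
    have h3 : P.map (fun ω => fun i => S (π i) ω) (B j)
        = P ((fun ω => fun i => S (π i) ω) ⁻¹' (B j)) :=
      Measure.map_apply hπm (hBm j)
    have h4 : (fun ω => fun i => S (π i) ω) ⁻¹' (B j) = A (Fin.last n) := by
      ext ω
      simp only [Set.mem_preimage, hB, Set.mem_setOf_eq, hA, hvec]
      have hπj : π j = Fin.last n := Equiv.swap_apply_left _ _
      rw [card_filter_comp_perm π (fun i => S i ω < S (π j) ω)]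
      simp only [hπj]
    rw [h1, h2, h3, h4]
  -- pointwise: at least k of the events hold
  have hpoint : ∀ ω, (k : ℝ≥0∞) ≤ ∑ j : Fin (n + 1), (A j).indicator (fun _ => 1) ω := by
    intro ω
    have hsum_eq : ∑ j : Fin (n + 1), (A j).indicator (fun _ => (1:ℝ≥0∞)) ω
        = ∑ j : Fin (n + 1), (if (Finset.univ.filter
            (fun i => S i ω < S j ω)).card + 1 ≤ k then (1:ℝ≥0∞) else 0) := by
      classical
      apply Finset.sum_congr rfl
      intro j _
      rw [Set.indicator_apply]
      exact if_congr Iff.rfl rfl rfl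
    have hcast : ((Finset.univ.filter (fun j : Fin (n + 1) =>
          (Finset.univ.filter (fun i => S i ω < S j ω)).card + 1 ≤ k)).card : ℝ≥0∞)
        = ∑ j : Fin (n + 1), (if (Finset.univ.filter
            (fun i => S i ω < S j ω)).card + 1 ≤ k then (1:ℝ≥0∞) else 0) := by
      rw [Finset.card_filter]
      push_cast
      rfl
    rw [hsum_eq, ← hcast]
    exact_mod_cast rank_card_lemma n k hk2 (fun i => S i ω)
  -- integrate
  have hsum : (k : ℝ≥0∞) ≤ (n + 1 : ℝ≥0∞) * P (A (Fin.last n)) := by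
    have h1 : (k : ℝ≥0∞) = ∫⁻ _, (k : ℝ≥0∞) ∂P := by
      simp
    have h2 : ∫⁻ ω, (k : ℝ≥0∞) ∂P
        ≤ ∫⁻ ω, ∑ j : Fin (n + 1), (A j).indicator (fun _ => 1) ω ∂P :=
      lintegral_mono hpoint
    have h3 : ∫⁻ ω, ∑ j : Fin (n + 1), (A j).indicator (fun _ => (1:ℝ≥0∞)) ω ∂P
        = ∑ j : Fin (n + 1), P (A j) := by
      rw [lintegral_finset_sum]
      · exact Finset.sum_congr rfl (fun j _ => lintegral_indicator_one (hAm j))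
      · intro j _
        exact (measurable_const).indicator (hAm j)
    have h4 : ∑ j : Fin (n + 1), P (A j) = (n + 1 : ℝ≥0∞) * P (A (Fin.last n)) := by
      rw [Finset.sum_congr rfl (fun j _ => hsame j)]
      simp [Finset.card_univ, mul_comm]
    calc (k : ℝ≥0∞) = ∫⁻ _, (k : ℝ≥0∞) ∂P := h1
      _ ≤ _ := h2
      _ = ∑ j : Fin (n + 1), P (A j) := h3
      _ = _ := h4
  -- conclude
  have hgoalset : {ω | (Finset.univ.filter
      (fun i : Fin (n + 1) => S i ω < S (Fin.last n) ω)).card + 1 ≤ k}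
      = A (Fin.last n) := rfl
  rw [hgoalset]
  have hne : ((n : ℝ≥0∞) + 1) ≠ 0 := by
    simp
  have hnt : ((n : ℝ≥0∞) + 1) ≠ ⊤ := by
    simp [ENNReal.add_eq_top]
  have : ENNReal.ofReal ((k : ℝ) / ((n : ℝ) + 1)) = (k : ℝ≥0∞) / ((n : ℝ≥0∞) + 1) := by
    rw [ENNReal.ofReal_div_of_pos (by positivity)]
    congr 1
    · simp
    · rw [ENNReal.ofReal_add (by positivity) zero_le_one]
      simp
  rw [this, ENNReal.div_le_iff hne hnt]
  calc (k : ℝ≥0∞) ≤ (n + 1 : ℝ≥0∞) * P (A (Fin.last n)) := hsum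
    _ = P (A (Fin.last n)) * ((n : ℝ≥0∞) + 1) := by ring
end
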